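/- arXiv:2507.04500 — 3 statements merged into one kernel-verified Lean document; each statement's English description precedes it below -/
import Mathlib

section
/- Let E and F be two L-outcome POVMs on ℂ^d. Then the supremum over all density matrices ρ (positive semidefinite matrices with trace 1) of (1/2)·∑_{j=1}^{L} |Re trace(E j · ρ) − Re trace(F j · ρ)| equals the maximum over all subsets x ⊆ Fin L of ‖∑_{j ∈ x} (E j − F j)‖, where ‖·‖ is the ℓ²→ℓ² operator (spectral) norm. -/
/-!
Write `D j = E j - F j`; these are Hermitian and sum to zero, so for a density matrix `ρ` the reals
`t j = Re tr (D j ρ)` sum to zero and `½ ∑ |t j| = ∑_{t j ≥ 0} t j = Re tr ((∑_{t j ≥ 0} D j) ρ)`,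
which is at most the spectral norm of that partial sum. Conversely, for any `x` the pure state on
an eigenvector of `∑_{j ∈ x} D j` whose eigenvalue has modulus equal to its norm gives
`∑_{j ∈ x} t j = ± ‖∑_{j ∈ x} D j‖`, and `2 |∑_{j ∈ x} t j| ≤ ∑ |t j|` again because `∑ t j = 0`.
-/

open scoped ComplexOrder
noncomputable def specNorm {ι : Type*} [Fintype ι] [DecidableEq ι] (A : Matrix ι ι ℂ) : ℝ :=
  ‖Matrix.toEuclideanCLM (𝕜 := ℂ) A‖

def IsPOVM {ι : Type*} {L : ℕ} [Fintype ι] [DecidableEq ι]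
    (E : Fin L → Matrix ι ι ℂ) : Prop :=
  (∀ j, (E j).PosSemidef) ∧ (∑ j, E j) = 1

open Matrix WithLp

section
variable {ι : Type*} [Fintype ι]

lemma sum_abs_eq_two_mul_sum_filter_nonneg {t : ι → ℝ} (ht : ∑ i, t i = 0) :
    ∑ i, |t i| = 2 * ∑ i with 0 ≤ t i, t i := by
  have habs (i : ι) : |t i| = 2 * (if 0 ≤ t i then t i else 0) - t i := by
    split_ifs with h
    · rw [abs_of_nonneg h]; ring
    · rw [abs_of_neg (not_le.mp h)]; ring
  rw [Finset.sum_congr rfl fun i _ => habs i, Finset.sum_sub_distrib, ht, sub_zero,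
    ← Finset.mul_sum, Finset.sum_filter]

lemma two_mul_abs_sum_le_sum_abs {t : ι → ℝ} (ht : ∑ i, t i = 0) (s : Finset ι) :
    2 * |∑ i ∈ s, t i| ≤ ∑ i, |t i| := by
  classical
  have hcompl : ∑ i ∈ sᶜ, t i = -∑ i ∈ s, t i := by
    rw [eq_neg_iff_add_eq_zero, add_comm, Finset.sum_add_sum_compl, ht]
  calc 2 * |∑ i ∈ s, t i| = |∑ i ∈ s, t i| + |∑ i ∈ sᶜ, t i| := by rw [hcompl, abs_neg]; ring
    _ ≤ ∑ i ∈ s, |t i| + ∑ i ∈ sᶜ, |t i| :=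
      add_le_add (Finset.abs_sum_le_sum_abs _ _) (Finset.abs_sum_le_sum_abs _ _)
    _ = ∑ i, |t i| := Finset.sum_add_sum_compl _ _

end

section
variable {n : Type*} [Fintype n]

lemma trace_vecMulVec_star (v : n → ℂ) : (vecMulVec v (star v)).trace = star v ⬝ᵥ v := by
  rw [trace_vecMulVec, dotProduct_comm]

lemma trace_mul_vecMulVec_star (A : Matrix n n ℂ) (v : n → ℂ) :
    (A * vecMulVec v (star v)).trace = star v ⬝ᵥ A *ᵥ v := by
  rw [mul_vecMulVec, trace_vecMulVec, dotProduct_comm]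

lemma re_star_dotProduct_self (v : n → ℂ) : (star v ⬝ᵥ v).re = ‖toLp 2 v‖ ^ 2 := by
  rw [dotProduct_comm, ← EuclideanSpace.inner_toLp_toLp, inner_self_eq_norm_sq_to_K]
  norm_cast

variable [DecidableEq n]

lemma abs_re_star_dotProduct_mulVec_le (A : Matrix n n ℂ) (v : n → ℂ) :
    |(star v ⬝ᵥ A *ᵥ v).re| ≤ specNorm A * (star v ⬝ᵥ v).re := by
  set w := toLp 2 v
  calc |(star v ⬝ᵥ A *ᵥ v).re| ≤ ‖star v ⬝ᵥ A *ᵥ v‖ := Complex.abs_re_le_norm _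
    _ = ‖inner ℂ w (toEuclideanCLM (𝕜 := ℂ) A w)‖ := by
      rw [toEuclideanCLM_toLp, EuclideanSpace.inner_toLp_toLp, dotProduct_comm]
    _ ≤ ‖w‖ * ‖toEuclideanCLM (𝕜 := ℂ) A w‖ := norm_inner_le_norm _ _
    _ ≤ ‖w‖ * (specNorm A * ‖w‖) := by gcongr; exact ContinuousLinearMap.le_opNorm _ _
    _ = specNorm A * (star v ⬝ᵥ v).re := by rw [re_star_dotProduct_self]; ring

lemma abs_re_trace_mul_le (A : Matrix n n ℂ) {ρ : Matrix n n ℂ} (hρ : ρ.PosSemidef) :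
    |(A * ρ).trace.re| ≤ specNorm A * ρ.trace.re := by
  obtain ⟨m, v, rfl⟩ := posSemidef_iff_eq_sum_vecMulVec.mp hρ
  simp only [Finset.mul_sum, trace_sum, trace_mul_vecMulVec_star, trace_vecMulVec_star,
    Complex.re_sum]
  exact (Finset.abs_sum_le_sum_abs _ _).trans
    (Finset.sum_le_sum fun i _ => abs_re_star_dotProduct_mulVec_le A (v i))

open scoped Matrix.Norms.L2Operator in
lemma Matrix.IsHermitian.exists_abs_eigenvalues_eq_specNorm [Nonempty n] {S : Matrix n n ℂ}
    (hS : S.IsHermitian) : ∃ i, |hS.eigenvalues i| = specNorm S := by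
  obtain ⟨z, hz, hzS⟩ := spectrum.exists_nnnorm_eq_spectralRadius S
  rw [hS.isSelfAdjoint.spectralRadius_eq_nnnorm] at hzS
  rw [hS.spectrum_eq_image_range] at hz
  obtain ⟨_, ⟨i, rfl⟩, rfl⟩ := hz
  refine ⟨i, ?_⟩
  have := congrArg ((↑) : NNReal → ℝ) (ENNReal.coe_injective hzS)
  simpa [specNorm, cstar_norm_def] using this

lemma Matrix.IsHermitian.exists_density_abs_re_trace_mul_eq_specNorm [Nonempty n]
    {S : Matrix n n ℂ} (hS : S.IsHermitian) :
    ∃ ρ : Matrix n n ℂ, ρ.PosSemidef ∧ ρ.trace = 1 ∧ |(S * ρ).trace.re| = specNorm S := by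
  obtain ⟨i, hi⟩ := hS.exists_abs_eigenvalues_eq_specNorm
  set v : n → ℂ := ofLp (hS.eigenvectorBasis i)
  have hv : star v ⬝ᵥ v = 1 := by
    rw [dotProduct_comm, ← EuclideanSpace.inner_eq_star_dotProduct]
    simp [inner_self_eq_norm_sq_to_K, (hS.eigenvectorBasis).orthonormal.1 i]
  refine ⟨vecMulVec v (star v), posSemidef_vecMulVec_self_star v, ?_, ?_⟩
  · rw [trace_vecMulVec_star, hv]
  · rw [trace_mul_vecMulVec_star, hS.mulVec_eigenvectorBasis, dotProduct_smul, hv]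
    simpa using hi

end

lemma sum_re_trace_mul {ι n : Type*} [Fintype n] (D : ι → Matrix n n ℂ) (ρ : Matrix n n ℂ)
    (s : Finset ι) : ∑ j ∈ s, (D j * ρ).trace.re = ((∑ j ∈ s, D j) * ρ).trace.re := by
  rw [Finset.sum_mul, trace_sum, Complex.re_sum]

section
variable {ι n : Type*} [Fintype ι] [Fintype n] {D : ι → Matrix n n ℂ}

lemma sum_re_trace_mul_eq_zero (hD : ∑ j, D j = 0) (ρ : Matrix n n ℂ) :
    ∑ j, (D j * ρ).trace.re = 0 := by
  rw [sum_re_trace_mul, hD, zero_mul, trace_zero, Complex.zero_re]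

variable [DecidableEq n]

lemma exists_half_sum_abs_re_trace_mul_le_specNorm (hD : ∑ j, D j = 0) {ρ : Matrix n n ℂ}
    (hρ : ρ.PosSemidef) (hρ1 : ρ.trace = 1) :
    ∃ s : Finset ι, (1 / 2 : ℝ) * ∑ j, |(D j * ρ).trace.re| ≤ specNorm (∑ j ∈ s, D j) := by
  refine ⟨Finset.univ.filter fun j => 0 ≤ (D j * ρ).trace.re, ?_⟩
  rw [sum_abs_eq_two_mul_sum_filter_nonneg (sum_re_trace_mul_eq_zero hD ρ), ← mul_assoc,
    one_div_mul_cancel two_ne_zero, one_mul, sum_re_trace_mul]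
  simpa [hρ1] using (le_abs_self _).trans (abs_re_trace_mul_le _ hρ)

lemma exists_density_specNorm_sum_le_half_sum_abs_re_trace_mul [Nonempty n]
    (hD : ∑ j, D j = 0) (hherm : ∀ j, (D j).IsHermitian) (s : Finset ι) :
    ∃ ρ : Matrix n n ℂ, ρ.PosSemidef ∧ ρ.trace = 1 ∧
      specNorm (∑ j ∈ s, D j) ≤ (1 / 2 : ℝ) * ∑ j, |(D j * ρ).trace.re| := by
  obtain ⟨ρ, hρ, hρ1, hS⟩ := (show (∑ j ∈ s, D j).IsHermitian from
    isSelfAdjoint_sum s fun j _ => hherm j).exists_density_abs_re_trace_mul_eq_specNorm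
  refine ⟨ρ, hρ, hρ1, ?_⟩
  rw [← hS, ← sum_re_trace_mul]
  linarith [two_mul_abs_sum_le_sum_abs (sum_re_trace_mul_eq_zero hD ρ) s]

end

/-- The operational distance (defined via a maximization over density matrices)
equals the maximal spectral norm of grouped differences of POVM elements. -/
theorem operational_distance_eq_max_subset
    {d L : ℕ} (hd : 0 < d)
    (E F : Fin L → Matrix (Fin d) (Fin d) ℂ)
    (hE : IsPOVM E) (hF : IsPOVM F) :
    (⨆ ρ : {ρ : Matrix (Fin d) (Fin d) ℂ // ρ.PosSemidef ∧ ρ.trace = 1},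
        (1 / 2 : ℝ) * ∑ j, |((E j * (ρ : Matrix (Fin d) (Fin d) ℂ)).trace.re) -
          ((F j * (ρ : Matrix (Fin d) (Fin d) ℂ)).trace.re)|) =
      ⨆ x : Finset (Fin L), specNorm (∑ j ∈ x, (E j - F j)) := by
  have : Nonempty (Fin d) := ⟨⟨0, hd⟩⟩
  have hD : ∑ j, (E j - F j) = 0 := by rw [Finset.sum_sub_distrib, hE.2, hF.2, sub_self]
  have hherm (j : Fin L) : (E j - F j).IsHermitian := (hE.1 j).1.sub (hF.1 j).1
  simp_rw [← Complex.sub_re, ← trace_sub, ← sub_mul]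
  have hle (ρ : {ρ : Matrix (Fin d) (Fin d) ℂ // ρ.PosSemidef ∧ ρ.trace = 1}) :
      (1 / 2 : ℝ) * ∑ j, |((E j - F j) * (ρ : Matrix (Fin d) (Fin d) ℂ)).trace.re| ≤
        ⨆ x : Finset (Fin L), specNorm (∑ j ∈ x, (E j - F j)) := by
    obtain ⟨s, hs⟩ := exists_half_sum_abs_re_trace_mul_le_specNorm hD ρ.2.1 ρ.2.2
    exact le_ciSup_of_le (Finite.bddAbove_range _) s hs
  refine le_antisymm (Real.iSup_le hle (Real.iSup_nonneg fun _ => norm_nonneg _))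
    (ciSup_le fun s => ?_)
  obtain ⟨ρ, hρ, hρ1, hs⟩ := exists_density_specNorm_sum_le_half_sum_abs_re_trace_mul hD hherm s
  exact le_ciSup_of_le ⟨_, Set.forall_mem_range.2 hle⟩ ⟨ρ, hρ, hρ1⟩ hs
end

section
/- Let n ≥ 1 and let φ : Fin m → (Fin 2 → ℂ) be unit vectors satisfying the single-qubit 2-design frame identity. For a multi-index i : Fin n → Fin m define the matrix ν i : Matrix (Fin n → Fin 2) (Fin n → Fin 2) ℂ entrywise by ν i x y = ∏_{k} ( 6·φ (i k) (x k)·conj(φ (i k) (y k)) − 2·(if x k = y k then 1 else 0) ), and define the product state ψ i : (Fin n → Fin 2) → ℂ by ψ i x = ∏_k φ (i k) (x k). Let F : Matrix (Fin n → Fin 2) (Fin n → Fin 2) ℂ be given entrywise by F x y = ∏_k F_k (x k) (y k) for matrices F_k : Matrix (Fin 2) (Fin 2) ℂ with 0 ≤ F_k ≤ 1 (positive semidefinite and 1 − F_k positive semidefinite). Then ∑_{i : Fin n → Fin m} (⟨ψ i, F (ψ i)⟩ / m^n) • (ν i)² is the matrix with entries ∏_k G_k (x k) (y k) where G_k = 2·(F_k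 + 2·(trace F_k) • 1), and consequently ‖∑_i (⟨ψ i, F (ψ i)⟩ / m^n) • (ν i)²‖ ≤ 10^n, where ‖·‖ is the ℓ²→ℓ² operator (spectral) norm. -/
open scoped ComplexOrder

noncomputable def cinner {ι : Type*} [Fintype ι] (u v : ι → ℂ) : ℂ :=
  ∑ x, (starRingEnd ℂ) (u x) * v x

noncomputable def outer {ι : Type*} (u : ι → ℂ) : Matrix ι ι ℂ :=
  Matrix.of fun x y => u x * (starRingEnd ℂ) (u y)

/-!
Everything factorises over the sites. For the product state `ψ i` and the product effect `F`,
the weight `⟨ψ i, F ψ i⟩ / m ^ n` is a product of single-site weights, and `ν i * ν i` is the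
Kronecker product of the single-site squares `(6 P - 2)² = 12 P + 4`, where `P = |φ⟩⟨φ|` is a
projection. Summing over multi-indices therefore yields the Kronecker product of single-site
averages, which the 2-design identity and its trace evaluate to `G k = 2 (F k + 2 tr (F k))`.
From `0 ≤ F k ≤ 1` we get `0 ≤ G k ≤ 10`; Kronecker products are monotone in positive
semidefinite factors, so `0 ≤ ⊗ G k ≤ 10 ^ n`, and for a positive element of the C⋆-algebra of
matrices this bounds the operator norm.
-/

open Finset
open scoped MatrixOrder

namespace Matrix

section piKronecker

variable {ι R : Type*} [Fintype ι] {α : ι → Type*}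

def piKronecker [CommMonoid R] (A : ∀ k, Matrix (α k) (α k) R) :
    Matrix (∀ k, α k) (∀ k, α k) R :=
  of fun x y => ∏ k, A k (x k) (y k)

@[simp]
lemma piKronecker_apply [CommMonoid R] (A : ∀ k, Matrix (α k) (α k) R) (x y : ∀ k, α k) :
    piKronecker A x y = ∏ k, A k (x k) (y k) := rfl

lemma piKronecker_conjTranspose [CommSemiring R] [StarRing R]
    (A : ∀ k, Matrix (α k) (α k) R) :
    (piKronecker A)ᴴ = piKronecker fun k => (A k)ᴴ := by
  ext x y
  simp [star_prod]

lemma piKronecker_smul_one [CommSemiring R] [∀ k, DecidableEq (α k)] (c : ι → R) :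
    piKronecker (fun k => c k • (1 : Matrix (α k) (α k) R)) = (∏ k, c k) • 1 := by
  ext x y
  simp [one_apply, prod_ite_zero, funext_iff]

variable [DecidableEq ι]

lemma piKronecker_update_sub [CommRing R] (A : ∀ k, Matrix (α k) (α k) R) (a : ι)
    (X Y : Matrix (α a) (α a) R) :
    piKronecker (Function.update A a (X - Y)) =
      piKronecker (Function.update A a X) - piKronecker (Function.update A a Y) := by
  ext x y
  have hrest (Z : Matrix (α a) (α a) R) :
      ∏ k ∈ {a}ᶜ, Function.update A a Z k (x k) (y k) = ∏ k ∈ {a}ᶜ, A k (x k) (y k) :=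
    prod_congr rfl fun k hk => by rw [Function.update_of_ne (by simpa using hk)]
  simp [Fintype.prod_eq_mul_prod_compl a, hrest, sub_mul]

lemma sum_smul_piKronecker [CommSemiring R] {β : ι → Type*} [∀ k, Fintype (β k)]
    (c : ∀ k, β k → R) (A : ∀ k, β k → Matrix (α k) (α k) R) :
    ∑ i : ∀ k, β k, (∏ k, c k (i k)) • piKronecker (fun k => A k (i k)) =
      piKronecker fun k => ∑ b, c k b • A k b := by
  ext x y
  simp only [sum_apply, smul_apply, smul_eq_mul, piKronecker_apply, Fintype.prod_sum,
    prod_mul_distrib]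

variable [∀ k, Fintype (α k)]

lemma piKronecker_mul [CommSemiring R] (A B : ∀ k, Matrix (α k) (α k) R) :
    piKronecker A * piKronecker B = piKronecker fun k => A k * B k := by
  ext x y
  simp only [mul_apply, piKronecker_apply, Fintype.prod_sum, prod_mul_distrib]

lemma piKronecker_mulVec [CommSemiring R] (A : ∀ k, Matrix (α k) (α k) R)
    (v : ∀ k, α k → R) :
    piKronecker A *ᵥ (fun x => ∏ k, v k (x k)) = fun x => ∏ k, (A k *ᵥ v k) (x k) := by
  ext x
  simp only [mulVec, dotProduct, piKronecker_apply, Fintype.prod_sum, prod_mul_distrib]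

lemma PosSemidef.piKronecker {A : ∀ k, Matrix (α k) (α k) ℂ} (hA : ∀ k, (A k).PosSemidef) :
    (Matrix.piKronecker A).PosSemidef := by
  classical
  choose B hB using fun k => CStarAlgebra.nonneg_iff_eq_star_mul_self.mp (hA k).nonneg
  simp only [star_eq_conjTranspose] at hB
  rw [funext hB, ← piKronecker_mul, ← piKronecker_conjTranspose]
  exact posSemidef_conjTranspose_mul_self _

lemma piKronecker_nonneg {A : ∀ k, Matrix (α k) (α k) ℂ} (hA : ∀ k, 0 ≤ A k) :
    0 ≤ Matrix.piKronecker A :=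
  (PosSemidef.piKronecker fun k => nonneg_iff_posSemidef.mp (hA k)).nonneg

lemma piKronecker_mono {A B : ∀ k, Matrix (α k) (α k) ℂ} (hA : ∀ k, 0 ≤ A k)
    (hAB : ∀ k, A k ≤ B k) :
    Matrix.piKronecker A ≤ Matrix.piKronecker B := by
  -- Trade the factors of `A` for those of `B` one site at a time: each trade adds the
  -- Kronecker product of positive factors with `B a - A a` at the site `a`.
  suffices ∀ s : Finset ι, Matrix.piKronecker A ≤ Matrix.piKronecker (s.piecewise B A) by
    simpa using this univ
  intro s
  induction s using Finset.induction_on with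
  | empty => simp
  | insert a s ha ih =>
    have hPa : Function.update (s.piecewise B A) a (A a) = s.piecewise B A := by
      simp [piecewise_eq_of_notMem _ _ _ ha]
    refine ih.trans (le_iff.mpr ?_)
    rw [piecewise_insert, ← hPa, Function.update_idem, ← piKronecker_update_sub]
    refine PosSemidef.piKronecker ((Function.forall_update_iff _
      fun k (M : Matrix (α k) (α k) ℂ) => M.PosSemidef).mpr ⟨le_iff.mp (hAB a), fun k _ => ?_⟩)
    exact s.piecewise_cases B A (fun M : Matrix (α k) (α k) ℂ => M.PosSemidef)
      (nonneg_iff_posSemidef.mp ((hA k).trans (hAB k))) (nonneg_iff_posSemidef.mp (hA k))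

end piKronecker

end Matrix

open Matrix

open scoped Matrix.Norms.L2Operator in
lemma specNorm_le_of_le_smul_one {ι : Type*} [Fintype ι] [DecidableEq ι] {M : Matrix ι ι ℂ}
    (hM : 0 ≤ M) {r : ℝ} (hr : 0 ≤ r) (h : M ≤ (r : ℂ) • 1) : specNorm M ≤ r :=
  (CStarAlgebra.norm_le_iff_le_algebraMap M hr hM).mpr
    (by rwa [Algebra.algebraMap_eq_smul_one, ← Complex.coe_smul])

lemma cinner_prod {ι : Type*} [Fintype ι] [DecidableEq ι] {α : ι → Type*}
    [∀ k, Fintype (α k)] (u v : ∀ k, α k → ℂ) :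
    cinner (fun x : ∀ k, α k => ∏ k, u k (x k)) (fun x => ∏ k, v k (x k)) =
      ∏ k, cinner (u k) (v k) := by
  simp only [cinner, map_prod, Fintype.prod_sum, prod_mul_distrib]

section outer

variable {ι : Type*} [Fintype ι]

lemma trace_outer (u : ι → ℂ) : (outer u).trace = cinner u u := by
  simp only [trace, Matrix.diag, outer, of_apply, cinner, mul_comm]

lemma outer_mul_self {u : ι → ℂ} (hu : cinner u u = 1) : outer u * outer u = outer u := by
  ext x y
  simp only [outer, mul_apply, of_apply]
  calc ∑ z, u x * (starRingEnd ℂ) (u z) * (u z * (starRingEnd ℂ) (u y))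
      = u x * (starRingEnd ℂ) (u y) * cinner u u := by
        simp only [cinner, mul_sum]
        exact sum_congr rfl fun z _ => by ring
    _ = u x * (starRingEnd ℂ) (u y) := by rw [hu, mul_one]

end outer

noncomputable def estimator (u : Fin 2 → ℂ) : Matrix (Fin 2) (Fin 2) ℂ :=
  (6 : ℂ) • outer u - (2 : ℂ) • 1

lemma estimator_mul_self {u : Fin 2 → ℂ} (hu : cinner u u = 1) :
    estimator u * estimator u = (12 : ℂ) • outer u + (4 : ℂ) • 1 := by
  simp only [estimator, sub_mul, mul_sub, smul_mul_assoc, mul_smul_comm, outer_mul_self hu,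
    one_mul, mul_one]
  module

noncomputable def secondMomentMap {ι : Type*} [Fintype ι] [DecidableEq ι]
    (A : Matrix ι ι ℂ) : Matrix ι ι ℂ :=
  (2 : ℂ) • (A + (2 * A.trace) • 1)

section secondMomentMap

variable {ι : Type*} [Fintype ι] [DecidableEq ι] {A : Matrix ι ι ℂ}

lemma secondMomentMap_nonneg (hA : 0 ≤ A) : 0 ≤ secondMomentMap A := by
  have hA' : A.PosSemidef := nonneg_iff_posSemidef.mp hA
  have htr : 0 ≤ 2 * A.trace := mul_nonneg zero_le_two hA'.trace_nonneg
  exact ((hA'.add (PosSemidef.one.smul htr)).smul zero_le_two).nonneg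

lemma secondMomentMap_le (hA : A ≤ 1) :
    secondMomentMap A ≤ (2 + 4 * (Fintype.card ι : ℂ)) • 1 := by
  have hA' : (1 - A).PosSemidef := le_iff.mp hA
  have htr : 0 ≤ 4 * (1 - A).trace := mul_nonneg (by norm_num) hA'.trace_nonneg
  have hdecomp : (2 + 4 * (Fintype.card ι : ℂ)) • 1 - secondMomentMap A =
      (2 : ℂ) • (1 - A) + (4 * (1 - A).trace) • 1 := by
    rw [secondMomentMap, trace_sub, trace_one]
    module
  exact le_iff.mpr (hdecomp ▸ (hA'.smul zero_le_two).add (PosSemidef.one.smul htr))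

end secondMomentMap

def IsQubitTwoDesign {m : ℕ} (φ : Fin m → Fin 2 → ℂ) : Prop :=
  ∀ X : Matrix (Fin 2) (Fin 2) ℂ,
    (1 / (m : ℂ)) • ∑ a, cinner (φ a) (X *ᵥ φ a) • outer (φ a) =
      (1 / 6 : ℂ) • (X + X.trace • (1 : Matrix (Fin 2) (Fin 2) ℂ))

namespace IsQubitTwoDesign

variable {m : ℕ} {φ : Fin m → Fin 2 → ℂ}

lemma mean_expectation (hdesign : IsQubitTwoDesign φ) (hunit : ∀ a, cinner (φ a) (φ a) = 1)
    (X : Matrix (Fin 2) (Fin 2) ℂ) :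
    (1 / (m : ℂ)) * ∑ a, cinner (φ a) (X *ᵥ φ a) = X.trace / 2 := by
  have h := congrArg trace (hdesign X)
  simp only [trace_smul, trace_sum, trace_add, trace_one, trace_outer, hunit, smul_eq_mul,
    mul_one, Fintype.card_fin] at h
  linear_combination h

lemma second_moment (hdesign : IsQubitTwoDesign φ) (hunit : ∀ a, cinner (φ a) (φ a) = 1)
    (X : Matrix (Fin 2) (Fin 2) ℂ) :
    (1 / (m : ℂ)) • ∑ a, cinner (φ a) (X *ᵥ φ a) • (estimator (φ a) * estimator (φ a)) =
      secondMomentMap X := by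
  simp only [estimator_mul_self (hunit _), smul_add, sum_add_distrib, smul_comm _ (12 : ℂ),
    ← smul_sum, ← sum_smul]
  rw [hdesign X, smul_smul, smul_smul, hdesign.mean_expectation hunit X, secondMomentMap]
  module

lemma second_moment_piKronecker {n : ℕ} (hdesign : IsQubitTwoDesign φ)
    (hunit : ∀ a, cinner (φ a) (φ a) = 1) (A : Fin n → Matrix (Fin 2) (Fin 2) ℂ) :
    ∑ i : Fin n → Fin m,
        (cinner (fun x : Fin n → Fin 2 => ∏ k, φ (i k) (x k))
            (piKronecker A *ᵥ fun x => ∏ k, φ (i k) (x k)) / (m : ℂ) ^ n) •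
          (piKronecker (fun k => estimator (φ (i k))) *
            piKronecker fun k => estimator (φ (i k))) =
      piKronecker fun k => secondMomentMap (A k) := by
  have hweight (i : Fin n → Fin m) :
      cinner (fun x : Fin n → Fin 2 => ∏ k, φ (i k) (x k))
          (piKronecker A *ᵥ fun x => ∏ k, φ (i k) (x k)) / (m : ℂ) ^ n =
        ∏ k, 1 / (m : ℂ) * cinner (φ (i k)) (A k *ᵥ φ (i k)) := by
    rw [piKronecker_mulVec, cinner_prod, prod_mul_distrib, prod_const, card_univ,
      Fintype.card_fin, _root_.one_div_pow, div_eq_mul_one_div, mul_comm]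
  simp only [hweight, piKronecker_mul]
  rw [sum_smul_piKronecker (fun k a => 1 / (m : ℂ) * cinner (φ a) (A k *ᵥ φ a))
    fun _ a => estimator (φ a) * estimator (φ a)]
  congr! with k
  rw [← hdesign.second_moment hunit, smul_sum]
  simp only [mul_smul]

end IsQubitTwoDesign

theorem local_two_design_second_moment_general
    {n m : ℕ} (φ : Fin m → (Fin 2 → ℂ))
    (hunit : ∀ a, cinner (φ a) (φ a) = 1)
    (hdesign : ∀ X : Matrix (Fin 2) (Fin 2) ℂ,
      (1 / (m : ℂ)) • ∑ a, cinner (φ a) (X.mulVec (φ a)) • outer (φ a) =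
        (1 / 6 : ℂ) • (X + X.trace • (1 : Matrix (Fin 2) (Fin 2) ℂ)))
    (ν : (Fin n → Fin m) → Matrix (Fin n → Fin 2) (Fin n → Fin 2) ℂ)
    (hν : ∀ i x y, ν i x y =
      ∏ k, (6 * φ (i k) (x k) * (starRingEnd ℂ) (φ (i k) (y k)) -
        2 * (if x k = y k then 1 else 0)))
    (ψ : (Fin n → Fin m) → ((Fin n → Fin 2) → ℂ))
    (hψ : ∀ i x, ψ i x = ∏ k, φ (i k) (x k))
    (Fk : Fin n → Matrix (Fin 2) (Fin 2) ℂ)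
    (hFk : ∀ k, (Fk k).PosSemidef ∧ (1 - Fk k).PosSemidef)
    (F : Matrix (Fin n → Fin 2) (Fin n → Fin 2) ℂ)
    (hF : ∀ x y, F x y = ∏ k, Fk k (x k) (y k)) :
    (∑ i, (cinner (ψ i) (F.mulVec (ψ i)) / ((m : ℂ) ^ n)) • (ν i * ν i) =
      Matrix.of fun x y =>
        ∏ k, ((2 : ℂ) • (Fk k + (2 * (Fk k).trace) • (1 : Matrix (Fin 2) (Fin 2) ℂ))) (x k) (y k)) ∧
    specNorm (∑ i, (cinner (ψ i) (F.mulVec (ψ i)) / ((m : ℂ) ^ n)) • (ν i * ν i)) ≤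
      (10 : ℝ) ^ n := by
  obtain rfl : ψ = fun i x => ∏ k, φ (i k) (x k) := funext₂ hψ
  obtain rfl : F = piKronecker Fk := ext hF
  obtain rfl : ν = fun i => piKronecker fun k => estimator (φ (i k)) := by
    funext i
    ext x y
    rw [hν]
    refine prod_congr rfl fun k _ => ?_
    simp only [estimator, outer, Matrix.sub_apply, Matrix.smul_apply, of_apply, one_apply,
      smul_eq_mul]
    ring
  have hmoment := IsQubitTwoDesign.second_moment_piKronecker hdesign hunit Fk
  have hG : ∀ k, 0 ≤ secondMomentMap (Fk k) := fun k => secondMomentMap_nonneg (hFk k).1.nonneg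
  have hG_le : ∀ k, secondMomentMap (Fk k) ≤ (10 : ℂ) • 1 := fun k =>
    (secondMomentMap_le (le_iff.mpr (hFk k).2)).trans_eq (by norm_num)
  refine ⟨hmoment, ?_⟩
  rw [hmoment]
  refine specNorm_le_of_le_smul_one (piKronecker_nonneg hG) (by positivity) ?_
  calc piKronecker (fun k => secondMomentMap (Fk k))
      ≤ piKronecker fun _ => (10 : ℂ) • 1 := piKronecker_mono hG hG_le
    _ = ((10 ^ n : ℝ) : ℂ) • 1 := by rw [piKronecker_smul_one]; simp

/-- Second moment of the local (tensor-product) 2-design estimator applied to a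
product POVM element, and the resulting variance bound `10^n`. -/
theorem local_two_design_second_moment
    {n m : ℕ} (hn : 1 ≤ n) (φ : Fin m → (Fin 2 → ℂ))
    (hunit : ∀ a, cinner (φ a) (φ a) = 1)
    (hdesign : ∀ X : Matrix (Fin 2) (Fin 2) ℂ,
      (1 / (m : ℂ)) • ∑ a, cinner (φ a) (X.mulVec (φ a)) • outer (φ a) =
        (1 / 6 : ℂ) • (X + X.trace • (1 : Matrix (Fin 2) (Fin 2) ℂ)))
    (ν : (Fin n → Fin m) → Matrix (Fin n → Fin 2) (Fin n → Fin 2) ℂ)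
    (hν : ∀ i x y, ν i x y =
      ∏ k, (6 * φ (i k) (x k) * (starRingEnd ℂ) (φ (i k) (y k)) -
        2 * (if x k = y k then 1 else 0)))
    (ψ : (Fin n → Fin m) → ((Fin n → Fin 2) → ℂ))
    (hψ : ∀ i x, ψ i x = ∏ k, φ (i k) (x k))
    (Fk : Fin n → Matrix (Fin 2) (Fin 2) ℂ)
    (hFk : ∀ k, (Fk k).PosSemidef ∧ (1 - Fk k).PosSemidef)
    (F : Matrix (Fin n → Fin 2) (Fin n → Fin 2) ℂ)
    (hF : ∀ x y, F x y = ∏ k, Fk k (x k) (y k)) :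
    (∑ i, (cinner (ψ i) (F.mulVec (ψ i)) / ((m : ℂ) ^ n)) • (ν i * ν i) =
      Matrix.of fun x y =>
        ∏ k, ((2 : ℂ) • (Fk k + (2 * (Fk k).trace) • (1 : Matrix (Fin 2) (Fin 2) ℂ))) (x k) (y k)) ∧
    specNorm (∑ i, (cinner (ψ i) (F.mulVec (ψ i)) / ((m : ℂ) ^ n)) • (ν i * ν i)) ≤
      (10 : ℝ) ^ n :=
  local_two_design_second_moment_general φ hunit hdesign ν hν ψ hψ Fk hFk F hF
end

section
/- Let d ≥ 1, let μ be the Haar probability measure on the unitary group U(d) = Matrix.unitaryGroup (Fin d) ℂ, and let A : Matrix (Fin d) (Fin d) ℂ be any matrix. Then ∫ U, (U · A · U†) dμ(U) = ((trace A)/d) • 1, where the integral of a matrix-valued function is taken entrywise and U† denotes the conjugate transpose of (the matrix underlying) the unitary U. -/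
/-!
By left invariance of Haar measure, the average `M = ∫ U A Uᴴ dμ(U)` satisfies `V M Vᴴ = M`
for every unitary `V`, i.e. `M` commutes with the unitary group. The reflections `1 - 2 Eᵢᵢ`
and the transposition matrices are unitary, and the algebra they generate contains every
matrix unit `Eᵢⱼ = P₍ᵢⱼ₎ Eⱼⱼ`, so `M` is scalar. As `trace (U A Uᴴ) = trace A`, that scalar is
`trace A / d`.
-/

open MeasureTheory
open scoped Matrix

noncomputable instance matrixMeasurableSpace {m n : Type*} : MeasurableSpace (Matrix m n ℂ) :=
  (inferInstance : MeasurableSpace (m → n → ℂ))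

namespace Matrix

variable {n R 𝕜 : Type*} [Fintype n] [DecidableEq n] [RCLike 𝕜]

theorem permMatrix_mem_unitaryGroup [CommRing R] [StarRing R] (σ : Equiv.Perm n) :
    σ.permMatrix R ∈ unitaryGroup n R := by
  rw [mem_unitaryGroup_iff, star_eq_conjTranspose, conjTranspose_permMatrix, ← permMatrix_mul,
    inv_mul_cancel, permMatrix_one]

theorem one_sub_two_smul_single_mem_unitaryGroup [CommRing R] [StarRing R] (i : n) :
    1 - (2 : R) • single i i (1 : R) ∈ unitaryGroup n R := by
  rw [mem_unitaryGroup_iff, star_sub, star_one, star_smul, star_ofNat, star_eq_conjTranspose,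
    conjTranspose_single, star_one]
  simp only [sub_mul, mul_sub, smul_mul_smul_comm, single_mul_single_same, mul_one, one_mul]
  module

theorem permMatrix_swap_mul_single [CommRing R] (i j : n) :
    (Equiv.swap i j).permMatrix R * single j j (1 : R) = single i j 1 := by
  ext a b
  simp [PEquiv.toMatrix_mul_apply, single_apply, eq_comm (a := j), Equiv.swap_apply_eq_iff,
    eq_comm (a := i)]

theorem mem_range_scalar_of_forall_commute_unitaryGroup [Field R] [StarRing R] [NeZero (2 : R)]
    {M : Matrix n n R} (hM : ∀ U ∈ unitaryGroup n R, Commute U M) :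
    M ∈ Set.range (scalar n) := by
  set C := Subalgebra.centralizer R {M}
  have unitary_mem : ∀ U ∈ unitaryGroup n R, U ∈ C := fun U hU =>
    (Subalgebra.mem_centralizer_iff R).2 fun _ h => h ▸ (hM U hU).symm.eq
  have single_mem : ∀ i, single i i (1 : R) ∈ C := fun i => by
    have h : single i i (1 : R) = (2 : R)⁻¹ • (1 - (1 - (2 : R) • single i i 1)) := by
      rw [sub_sub_cancel, smul_smul, inv_mul_cancel₀ two_ne_zero, one_smul]
    rw [h]
    exact C.smul_mem (sub_mem C.one_mem
      (unitary_mem _ (one_sub_two_smul_single_mem_unitaryGroup i))) _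
  refine mem_range_scalar_iff_commute_single'.2 fun i j => ?_
  have h := C.mul_mem (unitary_mem _ (permMatrix_mem_unitaryGroup (Equiv.swap i j)))
    (single_mem j)
  rw [permMatrix_swap_mul_single] at h
  exact ((Subalgebra.mem_centralizer_iff R).1 h M rfl).symm

theorem eq_trace_div_smul_one_of_mem_range_scalar [Field R] [CharZero R] {M : Matrix n n R}
    (hM : M ∈ Set.range (scalar n)) : M = (M.trace / Fintype.card n) • 1 := by
  obtain ⟨c, rfl⟩ := hM
  cases isEmpty_or_nonempty n
  · exact Subsingleton.elim _ _
  rw [scalar_apply, ← smul_one_eq_diagonal, trace_smul, trace_one, smul_eq_mul,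
    mul_div_cancel_right₀ _ (Nat.cast_ne_zero.2 Fintype.card_ne_zero)]

theorem isClosed_unitaryGroup : IsClosed (unitaryGroup n 𝕜 : Set (Matrix n n 𝕜)) := by
  have h : (unitaryGroup n 𝕜 : Set (Matrix n n 𝕜)) = {U | U * star U = 1} := by
    ext U; exact mem_unitaryGroup_iff
  rw [h]
  exact isClosed_eq (continuous_id.matrix_mul continuous_star) continuous_const

instance : CompactSpace (unitaryGroup n 𝕜) := by
  refine isCompact_iff_compactSpace.1 <|
    (isCompact_univ_pi fun _ => isCompact_univ_pi fun _ => isCompact_closedBall (0 : 𝕜) 1)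
      |>.of_isClosed_subset isClosed_unitaryGroup fun U hU i _ j _ => ?_
  simpa using entry_norm_bound_of_unitary hU i j

end Matrix

section EntrywiseIntegral

variable {G l m n 𝕜 : Type*} [MeasurableSpace G] {μ : Measure G} [RCLike 𝕜]

namespace Matrix

theorem mul_of_integral [Fintype m] (B : Matrix l m 𝕜) {f : G → Matrix m n 𝕜}
    (hf : ∀ i j, Integrable (fun g => f g i j) μ) :
    B * of (fun i j => ∫ g, f g i j ∂μ) = of fun i j => ∫ g, (B * f g) i j ∂μ := by
  ext i j
  simp only [mul_apply, of_apply, ← integral_const_mul]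
  exact (integral_finsetSum _ fun k _ => (hf k j).const_mul _).symm

theorem of_integral_mul [Fintype m] {f : G → Matrix l m 𝕜} (C : Matrix m n 𝕜)
    (hf : ∀ i j, Integrable (fun g => f g i j) μ) :
    of (fun i j => ∫ g, f g i j ∂μ) * C = of fun i j => ∫ g, (f g * C) i j ∂μ := by
  ext i j
  simp only [mul_apply, of_apply, ← integral_mul_const]
  exact (integral_finsetSum _ fun k _ => (hf i k).mul_const _).symm

theorem trace_of_integral [Fintype n] {f : G → Matrix n n 𝕜}
    (hf : ∀ i, Integrable (fun g => f g i i) μ) :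
    trace (of fun i j => ∫ g, f g i j ∂μ) = ∫ g, trace (f g) ∂μ :=
  (integral_finsetSum _ fun i _ => hf i).symm

end Matrix

theorem Continuous.integrable_matrix_apply [TopologicalSpace G] [CompactSpace G]
    [OpensMeasurableSpace G] [IsFiniteMeasure μ] {f : G → Matrix m n 𝕜} (hf : Continuous f)
    (i : m) (j : n) : Integrable (fun g => f g i j) μ :=
  (hf.matrix_elem i j).integrable_of_hasCompactSupport (HasCompactSupport.of_compactSpace _)

end EntrywiseIntegral

instance Matrix.borelSpace {m n : Type*} [Countable m] [Countable n] :
    BorelSpace (Matrix m n ℂ) :=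
  Pi.borelSpace

instance Matrix.unitaryGroup.borelSpace {n : Type*} [Fintype n] [DecidableEq n] :
    BorelSpace (Matrix.unitaryGroup n ℂ) :=
  Subtype.borelSpace _

section UnitaryTwirl

open Matrix

variable {n : Type*} [Fintype n] [DecidableEq n] (μ : Measure (unitaryGroup n ℂ))
  (A : Matrix n n ℂ)

noncomputable def unitaryTwirl : Matrix n n ℂ :=
  of fun i j => ∫ U : unitaryGroup n ℂ, ((U : Matrix n n ℂ) * A * (U : Matrix n n ℂ)ᴴ) i j ∂μ

theorem continuous_unitaryConj :
    Continuous fun U : unitaryGroup n ℂ => (U : Matrix n n ℂ) * A * (U : Matrix n n ℂ)ᴴ :=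
  (continuous_subtype_val.matrix_mul continuous_const).matrix_mul
    continuous_subtype_val.matrix_conjTranspose

theorem conj_unitaryTwirl [IsFiniteMeasure μ] [μ.IsMulLeftInvariant] (V : unitaryGroup n ℂ) :
    (V : Matrix n n ℂ) * unitaryTwirl μ A * (V : Matrix n n ℂ)ᴴ = unitaryTwirl μ A := by
  have hconj := continuous_unitaryConj A
  rw [unitaryTwirl, mul_of_integral _ hconj.integrable_matrix_apply,
    of_integral_mul _ (continuous_const.matrix_mul hconj).integrable_matrix_apply]
  ext i j
  refine Eq.trans ?_ (integral_mul_left_eq_self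
    (fun U : unitaryGroup n ℂ => ((U : Matrix n n ℂ) * A * (U : Matrix n n ℂ)ᴴ) i j) V)
  simp only [of_apply, UnitaryGroup.mul_val, conjTranspose_mul, Matrix.mul_assoc]

theorem commute_unitaryTwirl [IsFiniteMeasure μ] [μ.IsMulLeftInvariant] (V : unitaryGroup n ℂ) :
    Commute (V : Matrix n n ℂ) (unitaryTwirl μ A) := by
  have hV : (V : Matrix n n ℂ)ᴴ * V = 1 := UnitaryGroup.star_mul_self V
  calc (V : Matrix n n ℂ) * unitaryTwirl μ A
      = V * unitaryTwirl μ A * ((V : Matrix n n ℂ)ᴴ * V) := by rw [hV, Matrix.mul_one]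
    _ = (V * unitaryTwirl μ A * (V : Matrix n n ℂ)ᴴ) * V := by simp only [Matrix.mul_assoc]
    _ = unitaryTwirl μ A * V := by rw [conj_unitaryTwirl]

theorem trace_unitaryTwirl [IsProbabilityMeasure μ] : trace (unitaryTwirl μ A) = trace A := by
  have h (U : unitaryGroup n ℂ) :
      trace ((U : Matrix n n ℂ) * A * (U : Matrix n n ℂ)ᴴ) = trace A := by
    rw [trace_mul_cycle, ← star_eq_conjTranspose, UnitaryGroup.star_mul_self, Matrix.one_mul]
  rw [unitaryTwirl,
    trace_of_integral fun i => (continuous_unitaryConj A).integrable_matrix_apply i i]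
  simp only [h, integral_const, probReal_univ, one_smul]

end UnitaryTwirl

theorem haar_average_conjugation_general
    {d : ℕ}
    (μ : Measure (Matrix.unitaryGroup (Fin d) ℂ))
    [μ.IsHaarMeasure] [IsProbabilityMeasure μ]
    (A : Matrix (Fin d) (Fin d) ℂ) :
    (Matrix.of fun x y =>
        ∫ U : Matrix.unitaryGroup (Fin d) ℂ,
          ((U : Matrix (Fin d) (Fin d) ℂ) * A * (U : Matrix (Fin d) (Fin d) ℂ)ᴴ) x y ∂μ) =
      (A.trace / (d : ℂ)) • (1 : Matrix (Fin d) (Fin d) ℂ) := by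
  have hscalar : unitaryTwirl μ A ∈ Set.range (Matrix.scalar (Fin d)) :=
    Matrix.mem_range_scalar_of_forall_commute_unitaryGroup fun V hV =>
      commute_unitaryTwirl μ A ⟨V, hV⟩
  have h := Matrix.eq_trace_div_smul_one_of_mem_range_scalar hscalar
  rwa [trace_unitaryTwirl, Fintype.card_fin] at h

/-- Averaging a conjugated matrix over the Haar measure on the unitary group
yields the normalized trace times the identity. -/
theorem haar_average_conjugation
    {d : ℕ} (hd : 1 ≤ d)
    (μ : Measure (Matrix.unitaryGroup (Fin d) ℂ))
    [μ.IsHaarMeasure] [IsProbabilityMeasure μ]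
    (A : Matrix (Fin d) (Fin d) ℂ) :
    (Matrix.of fun x y =>
        ∫ U : Matrix.unitaryGroup (Fin d) ℂ,
          ((U : Matrix (Fin d) (Fin d) ℂ) * A * (U : Matrix (Fin d) (Fin d) ℂ)ᴴ) x y ∂μ) =
      (A.trace / (d : ℂ)) • (1 : Matrix (Fin d) (Fin d) ℂ) :=
  haar_average_conjugation_general μ A
end
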